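/- arXiv:1901.07918 — 2 statements merged into one kernel-verified Lean document; each statement's English description precedes it below -/
import Mathlib

section
/- Let 𝔪_1,…,𝔪_t be monomials in x_1,…,x_m, n_i = 𝔪_i/gcd(𝔪_i,𝔪_t), and let φ̃′: T′(𝔪_1,…,𝔪_{t−1}) → T′(n_1,…,n_{t−1}) be the cochain map φ̃′(x^α e^J) = (x^α·𝔪_J/𝔪_{J∪{t}})·ē^J. Then the dual Taylor complex T′(𝔪_1,…,𝔪_t) is isomorphic, as a cochain complex of k-modules, to the cocone of φ̃′; the isomorphism can be chosen degreewise, sending x^α ẽ^J to ±x^α ē^{J∖{t}} when t ∈ J and to ±x^α e^J when t ∉ J, for suitable signs. -/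
/-!
The t monomials are `Fin.snoc a b`, so every J ⊆ {1,…,t} is either `K.map Fin.castSuccEmb` or
`insert (Fin.last n) (K.map Fin.castSuccEmb)` with K ⊆ {1,…,t−1}. On x^α e^K the differential of
T′(𝔪_1,…,𝔪_t) splits into the summands j < t, which form ∂ of T′(𝔪_1,…,𝔪_{t−1}), and the summand
j = t, which is φ̃′ up to sign(t, K) = (−1)^|K|, because 𝔪_{K∪{t}} = lcm(𝔪_K, 𝔪_t). On
x^α e^{K∪{t}} only the summands j < t occur: adding the largest index changes no sign(j, ·), and
lcm(𝔪_K, 𝔪_t) = n_K · 𝔪_t, so the divisibility conditions and quotients are those of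
T′(n_1,…,n_{t−1}). Hence the signs ε₁(K) = (−1)^|K| and ε₂ = 1 make the maps commute with the
differentials, and they are bijective since they carry the monomial basis of the cocone to ± the
monomial basis of T′(𝔪_1,…,𝔪_t).
-/

open Finset

/-- sign(j, J) for j ∉ J: (−1)^(number of elements of J smaller than j). -/
def taylorSign {t : ℕ} (J : Finset (Fin t)) (j : Fin t) : ℤ :=
  (-1) ^ (J.filter fun i => i < j).card

/-- Exponent vector of the monomial 𝔪_J = lcm_{j ∈ J} 𝔪_j (pointwise maximum). -/
noncomputable def lcmExp {m t : ℕ} (a : Fin t → (Fin m →₀ ℕ)) (J : Finset (Fin t)) :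
    Fin m →₀ ℕ :=
  J.sup a

/-- The s-th term I^s of the dual Taylor complex: the free k-module with basis
{x^α e^J : α ∈ ℕ^m, J ⊆ {1,…,t}, |J| = s}. -/
abbrev DualX (k : Type*) [CommRing k] (m t s : ℕ) : Type _ :=
  ((Fin m →₀ ℕ) × {J : Finset (Fin t) // J.card = s}) →₀ k

open scoped Classical in
/-- The dual Taylor differential
∂(x^α e^J) = Σ_{j∉J} sign(j,J)·(x^α·𝔪_J/𝔪_{J∪{j}})·e^{J∪{j}},
a summand being zero unless 𝔪_{J∪{j}} divides x^α·𝔪_J. -/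
noncomputable def dualD {k : Type*} [CommRing k] {m t : ℕ}
    (a : Fin t → (Fin m →₀ ℕ)) (s : ℕ) :
    DualX k m t s →ₗ[k] DualX k m t (s + 1) :=
  Finsupp.lsum ℕ fun p =>
    LinearMap.toSpanSingleton k (DualX k m t (s + 1))
      (∑ j ∈ p.2.1ᶜ.attach,
        taylorSign p.2.1 j.1 •
          (if lcmExp a (insert j.1 p.2.1) ≤ p.1 + lcmExp a p.2.1 then
            Finsupp.single
              (p.1 + lcmExp a p.2.1 - lcmExp a (insert j.1 p.2.1),
                ⟨insert j.1 p.2.1, by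
                  rw [Finset.card_insert_of_notMem (Finset.mem_compl.mp j.2), p.2.2]⟩)
              (1 : k)
          else 0))

open scoped Classical in
/-- The map φ̃′ in degree s, given on basis elements by
φ̃′(x^α e^J) = (x^α·𝔪_J/𝔪_{J∪{t}})·ē^J, the image being zero unless
𝔪_{J∪{t}} divides x^α·𝔪_J. -/
noncomputable def dualPhi {k : Type*} [CommRing k] {m n : ℕ}
    (a : Fin n → (Fin m →₀ ℕ)) (b : Fin m →₀ ℕ) (s : ℕ) :
    DualX k m n s →ₗ[k] DualX k m n s :=
  Finsupp.lsum ℕ fun p =>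
    LinearMap.toSpanSingleton k (DualX k m n s)
      (if lcmExp a p.2.1 ⊔ b ≤ p.1 + lcmExp a p.2.1 then
        Finsupp.single (p.1 + lcmExp a p.2.1 - (lcmExp a p.2.1 ⊔ b), p.2) (1 : k)
      else 0)

/-- The signed inclusion x^α e^J ↦ ε(J)·x^α ẽ^J of the dual Taylor complex on
t−1 monomials into the dual Taylor complex on t monomials. -/
noncomputable def dualIota {k : Type*} [CommRing k] {m n : ℕ}
    (ε : Finset (Fin n) → ℤ) (s : ℕ) :
    DualX k m n s →ₗ[k] DualX k m (n + 1) s :=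
  Finsupp.lsum ℕ fun p =>
    LinearMap.toSpanSingleton k (DualX k m (n + 1) s)
      (ε p.2.1 •
        Finsupp.single (p.1, ⟨p.2.1.map Fin.castSuccEmb, by rw [Finset.card_map, p.2.2]⟩)
          (1 : k))

/-- The signed map x^α ē^J ↦ ε(J)·x^α ẽ^{J∪{t}}. -/
noncomputable def dualSigma {k : Type*} [CommRing k] {m n : ℕ}
    (ε : Finset (Fin n) → ℤ) (s : ℕ) :
    DualX k m n s →ₗ[k] DualX k m (n + 1) (s + 1) :=
  Finsupp.lsum ℕ fun p =>
    LinearMap.toSpanSingleton k (DualX k m (n + 1) (s + 1))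
      (ε p.2.1 •
        Finsupp.single
          (p.1,
            ⟨insert (Fin.last n) (p.2.1.map Fin.castSuccEmb), by
              rw [Finset.card_insert_of_notMem (by
                  simp only [Finset.mem_map]
                  rintro ⟨x, -, h⟩
                  exact (Fin.castSucc_lt_last x).ne h),
                Finset.card_map, p.2.2]⟩)
          (1 : k))


section Combinatorics

variable {m n : ℕ}

theorem last_notMem_map_castSuccEmb (K : Finset (Fin n)) :
    Fin.last n ∉ K.map Fin.castSuccEmb := by
  simp

theorem compl_map_castSuccEmb (K : Finset (Fin n)) :
    (K.map Fin.castSuccEmb)ᶜ = insert (Fin.last n) (Kᶜ.map Fin.castSuccEmb) := by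
  ext x
  induction x using Fin.lastCases with
  | last => simp
  | cast i => simp [(Fin.castSucc_lt_last i).ne]

theorem compl_insert_last_map_castSuccEmb (K : Finset (Fin n)) :
    (insert (Fin.last n) (K.map Fin.castSuccEmb))ᶜ = Kᶜ.map Fin.castSuccEmb := by
  rw [compl_insert, compl_map_castSuccEmb, erase_insert (last_notMem_map_castSuccEmb _)]

theorem insert_castSucc_map_castSuccEmb (K : Finset (Fin n)) (j : Fin n) :
    insert (Fin.castSucc j) (K.map Fin.castSuccEmb) = (insert j K).map Fin.castSuccEmb :=
  (map_insert _ _ _).symm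

theorem lcmExp_snoc_map_castSuccEmb (a : Fin n → (Fin m →₀ ℕ)) (b : Fin m →₀ ℕ)
    (K : Finset (Fin n)) : lcmExp (Fin.snoc a b) (K.map Fin.castSuccEmb) = lcmExp a K := by
  simp [lcmExp, sup_map, Function.comp_def]

theorem lcmExp_snoc_insert_last (a : Fin n → (Fin m →₀ ℕ)) (b : Fin m →₀ ℕ)
    (K : Finset (Fin n)) :
    lcmExp (Fin.snoc a b) (insert (Fin.last n) (K.map Fin.castSuccEmb)) = lcmExp a K ⊔ b := by
  rw [lcmExp, sup_insert, Fin.snoc_last, ← lcmExp, lcmExp_snoc_map_castSuccEmb, sup_comm]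

theorem lcmExp_tsub (a : Fin n → (Fin m →₀ ℕ)) (b : Fin m →₀ ℕ) (K : Finset (Fin n)) :
    lcmExp (fun i => a i - a i ⊓ b) K = lcmExp a K - b := by
  have hsub : ∀ c : Fin m →₀ ℕ, c - c ⊓ b = c - b := fun c => by ext x; simp; omega
  simp only [lcmExp, hsub]
  exact (apply_sup_eq_sup_comp (· - b) (fun u v => by ext x; simp; omega) (zero_tsub b)).symm

theorem taylorSign_insert_of_lt {t : ℕ} (J : Finset (Fin t)) {i j : Fin t} (h : j < i) :
    taylorSign (insert i J) j = taylorSign J j := by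
  rw [taylorSign, filter_insert, if_neg h.not_gt, taylorSign]

theorem taylorSign_map_castSuccEmb (K : Finset (Fin n)) (j : Fin n) :
    taylorSign (K.map Fin.castSuccEmb) (Fin.castSucc j) = taylorSign K j := by
  simp [taylorSign, filter_map, Function.comp_def]

theorem taylorSign_map_castSuccEmb_last (K : Finset (Fin n)) :
    taylorSign (K.map Fin.castSuccEmb) (Fin.last n) = (-1) ^ K.card := by
  rw [taylorSign, filter_true_of_mem, card_map]
  simp

end Combinatorics

section Monomials

variable {k : Type*} [CommRing k] {m : ℕ}

open scoped Classical in
/-- x^β e^J, with the junk value 0 when |J| ≠ s, so that formulas need no cardinality proofs. -/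
noncomputable def taylorMonomial {t : ℕ} (s : ℕ) (J : Finset (Fin t)) (β : Fin m →₀ ℕ) :
    DualX k m t s :=
  if h : J.card = s then Finsupp.single (β, ⟨J, h⟩) 1 else 0

open scoped Classical in
noncomputable def quotMonomial {t : ℕ} (s : ℕ) (J : Finset (Fin t)) (β M M' : Fin m →₀ ℕ) :
    DualX k m t s :=
  if M' ≤ β + M then taylorMonomial s J (β + M - M') else 0

theorem single_eq_taylorMonomial {t s : ℕ} (β : Fin m →₀ ℕ) (J : Finset (Fin t))
    (h : J.card = s) :
    (Finsupp.single (β, ⟨J, h⟩) 1 : DualX k m t s) = taylorMonomial s J β := by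
  rw [taylorMonomial, dif_pos h]

theorem taylorMonomial_of_card_ne {t s : ℕ} (β : Fin m →₀ ℕ) {J : Finset (Fin t)}
    (h : J.card ≠ s) : (taylorMonomial s J β : DualX k m t s) = 0 := by
  rw [taylorMonomial, dif_neg h]

theorem DualX.hom_ext {t s : ℕ} {M : Type*} [AddCommGroup M] [Module k M]
    {f g : DualX k m t s →ₗ[k] M}
    (h : ∀ J β, f (taylorMonomial s J β) = g (taylorMonomial s J β)) : f = g :=
  Finsupp.lhom_ext' fun ⟨β, J, hJ⟩ =>
    LinearMap.ext_ring (by simpa [single_eq_taylorMonomial] using h J β)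

theorem quotMonomial_sup_eq_tsub {t s : ℕ} (J : Finset (Fin t)) (β M M' b : Fin m →₀ ℕ) :
    (quotMonomial s J β (M ⊔ b) (M' ⊔ b) : DualX k m t s) =
      quotMonomial s J β (M - b) (M' - b) := by
  have h : ∀ N : Fin m →₀ ℕ, N ⊔ b = N - b + b := fun N => by ext x; simp; omega
  simp only [quotMonomial, h M, h M', ← add_assoc, add_le_add_iff_right,
    add_tsub_add_eq_tsub_right]

theorem dualD_taylorMonomial {t : ℕ} (a : Fin t → (Fin m →₀ ℕ)) (s : ℕ) (J : Finset (Fin t))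
    (β : Fin m →₀ ℕ) :
    dualD (k := k) a s (taylorMonomial s J β) =
      ∑ j ∈ Jᶜ, taylorSign J j •
        quotMonomial (s + 1) (insert j J) β (lcmExp a J) (lcmExp a (insert j J)) := by
  by_cases hJ : J.card = s
  · rw [← single_eq_taylorMonomial β J hJ, dualD, Finsupp.lsum_single,
      LinearMap.toSpanSingleton_apply, one_smul, ← sum_attach Jᶜ fun j => taylorSign J j •
      quotMonomial (k := k) (s + 1) (insert j J) β (lcmExp a J) (lcmExp a (insert j J))]
    refine sum_congr rfl fun j _ => ?_
    simp only [quotMonomial, single_eq_taylorMonomial]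
  · rw [taylorMonomial_of_card_ne β hJ, map_zero]
    refine (sum_eq_zero fun j hj => ?_).symm
    rw [quotMonomial, taylorMonomial_of_card_ne _ fun h => hJ ?_, ite_self, smul_zero]
    rwa [card_insert_of_notMem (mem_compl.mp hj), add_left_inj] at h

theorem dualPhi_taylorMonomial {n : ℕ} (a : Fin n → (Fin m →₀ ℕ)) (b : Fin m →₀ ℕ) (s : ℕ)
    (J : Finset (Fin n)) (β : Fin m →₀ ℕ) :
    dualPhi (k := k) a b s (taylorMonomial s J β) =
      quotMonomial s J β (lcmExp a J) (lcmExp a J ⊔ b) := by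
  by_cases hJ : J.card = s
  · rw [← single_eq_taylorMonomial β J hJ, dualPhi, Finsupp.lsum_single,
      LinearMap.toSpanSingleton_apply, one_smul, quotMonomial]
    split_ifs <;> simp [single_eq_taylorMonomial]
  · simp [taylorMonomial_of_card_ne _ hJ, quotMonomial]

theorem dualIota_taylorMonomial {n : ℕ} (ε : Finset (Fin n) → ℤ) (s : ℕ) (J : Finset (Fin n))
    (β : Fin m →₀ ℕ) :
    dualIota (k := k) ε s (taylorMonomial s J β) =
      ε J • taylorMonomial s (J.map Fin.castSuccEmb) β := by
  by_cases hJ : J.card = s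
  · rw [← single_eq_taylorMonomial β J hJ, dualIota, Finsupp.lsum_single,
      LinearMap.toSpanSingleton_apply, one_smul, single_eq_taylorMonomial]
  · rw [taylorMonomial_of_card_ne β hJ, taylorMonomial_of_card_ne β (by rwa [card_map]),
      map_zero, smul_zero]

theorem dualSigma_taylorMonomial {n : ℕ} (ε : Finset (Fin n) → ℤ) (s : ℕ) (J : Finset (Fin n))
    (β : Fin m →₀ ℕ) :
    dualSigma (k := k) ε s (taylorMonomial s J β) =
      ε J • taylorMonomial (s + 1) (insert (Fin.last n) (J.map Fin.castSuccEmb)) β := by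
  by_cases hJ : J.card = s
  · rw [← single_eq_taylorMonomial β J hJ, dualSigma, Finsupp.lsum_single,
      LinearMap.toSpanSingleton_apply, one_smul, single_eq_taylorMonomial]
  · rw [taylorMonomial_of_card_ne β hJ, taylorMonomial_of_card_ne β (by
      rwa [card_insert_of_notMem (last_notMem_map_castSuccEmb J), card_map, Ne, add_left_inj]),
      map_zero, smul_zero]

theorem dualIota_quotMonomial {n : ℕ} (ε : Finset (Fin n) → ℤ) (s : ℕ) (J : Finset (Fin n))
    (β M M' : Fin m →₀ ℕ) :
    dualIota (k := k) ε s (quotMonomial s J β M M') =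
      ε J • quotMonomial s (J.map Fin.castSuccEmb) β M M' := by
  unfold quotMonomial
  split_ifs <;> simp [dualIota_taylorMonomial]

theorem dualSigma_quotMonomial {n : ℕ} (ε : Finset (Fin n) → ℤ) (s : ℕ) (J : Finset (Fin n))
    (β M M' : Fin m →₀ ℕ) :
    dualSigma (k := k) ε s (quotMonomial s J β M M') =
      ε J • quotMonomial (s + 1) (insert (Fin.last n) (J.map Fin.castSuccEmb)) β M M' := by
  unfold quotMonomial
  split_ifs <;> simp [dualSigma_taylorMonomial]

end Monomials

section ChainMap

variable {k : Type*} [CommRing k] {m n : ℕ}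

def altSign {α : Type*} (J : Finset α) : ℤ := (-1) ^ J.card

theorem altSign_eq_one_or_neg_one {α : Type*} (J : Finset α) : altSign J = 1 ∨ altSign J = -1 :=
  neg_one_pow_eq_or ℤ J.card

theorem altSign_insert {α : Type*} [DecidableEq α] {J : Finset α} {j : α} (h : j ∉ J) :
    altSign (insert j J) = -altSign J := by
  rw [altSign, altSign, card_insert_of_notMem h, pow_succ, mul_neg_one]

theorem dualIota_neg_dualD_add_dualSigma_dualPhi (a : Fin n → (Fin m →₀ ℕ)) (b : Fin m →₀ ℕ)
    (s : ℕ) (x : DualX k m n s) :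
    dualIota altSign (s + 1) (-dualD a s x) + dualSigma (fun _ => 1) s (dualPhi a b s x) =
      dualD (Fin.snoc a b) s (dualIota altSign s x) := by
  suffices h : (dualIota altSign (s + 1)).comp (-dualD (k := k) a s) +
      (dualSigma (fun _ => 1) s).comp (dualPhi a b s) =
      (dualD (k := k) (Fin.snoc a b) s).comp (dualIota altSign s) from LinearMap.congr_fun h x
  refine DualX.hom_ext fun J β => ?_
  simp only [LinearMap.add_apply, LinearMap.comp_apply, LinearMap.neg_apply, map_neg, map_sum,
    map_zsmul, dualD_taylorMonomial, dualPhi_taylorMonomial, dualIota_taylorMonomial,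
    dualIota_quotMonomial, dualSigma_quotMonomial, compl_map_castSuccEmb,
    sum_insert (last_notMem_map_castSuccEmb _), sum_map, Fin.coe_castSuccEmb,
    taylorSign_map_castSuccEmb, taylorSign_map_castSuccEmb_last, lcmExp_snoc_map_castSuccEmb,
    lcmExp_snoc_insert_last, insert_castSucc_map_castSuccEmb]
  have hsq : altSign J * (-1) ^ J.card = 1 := by rw [altSign, ← pow_add, Even.neg_one_pow ⟨_, rfl⟩]
  rw [sum_congr rfl fun j hj => by rw [altSign_insert (mem_compl.mp hj), smul_comm], ← smul_sum,
    smul_add, smul_smul, hsq]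
  module

theorem dualSigma_dualD_eq_dualD_dualSigma (a : Fin n → (Fin m →₀ ℕ)) (b : Fin m →₀ ℕ) (s : ℕ)
    (x : DualX k m n s) :
    dualSigma (fun _ => 1) (s + 1) (dualD (fun i => a i - a i ⊓ b) s x) =
      dualD (Fin.snoc a b) (s + 1) (dualSigma (fun _ => 1) s x) := by
  suffices h : (dualSigma (fun _ => 1) (s + 1)).comp (dualD (fun i => a i - a i ⊓ b) s) =
      (dualD (k := k) (Fin.snoc a b) (s + 1)).comp (dualSigma (fun _ => 1) s) from
    LinearMap.congr_fun h x
  refine DualX.hom_ext fun J β => ?_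
  simp only [LinearMap.comp_apply, map_sum, map_zsmul, one_smul, dualD_taylorMonomial,
    dualSigma_taylorMonomial, dualSigma_quotMonomial, compl_insert_last_map_castSuccEmb, sum_map,
    Fin.coe_castSuccEmb, taylorSign_insert_of_lt _ (Fin.castSucc_lt_last _),
    taylorSign_map_castSuccEmb, insert_comm _ (Fin.last n), insert_castSucc_map_castSuccEmb,
    lcmExp_snoc_insert_last, lcmExp_tsub, quotMonomial_sup_eq_tsub]

end ChainMap

theorem Module.Basis.bijective_of_apply_eq_zsmul {ι κ R M N : Type*} [Ring R] [AddCommGroup M]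
    [Module R M] [AddCommGroup N] [Module R N] (b : Module.Basis ι R M) (c : Module.Basis κ R N)
    (e : ι ≃ κ) (ε : ι → ℤ) (hε : ∀ i, ε i = 1 ∨ ε i = -1) {f : M →ₗ[R] N}
    (h : ∀ i, f (b i) = ε i • c (e i)) : Function.Bijective f := by
  let c' := (c.reindex e.symm).isUnitSMul (w := fun i => (ε i : R)) fun i => by
    rcases hε i with h | h <;> simp [h]
  have hf : f = (b.equiv c' (Equiv.refl ι)).toLinearMap :=
    b.ext fun i => by simp [c', h, Module.Basis.isUnitSMul_apply, Int.cast_smul_eq_zsmul]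
  exact hf ▸ (b.equiv c' (Equiv.refl ι)).bijective

section Reindexing

variable {n : ℕ}

def cardZeroEquiv (α β : Type*) : {J : Finset α // J.card = 0} ≃ {J : Finset β // J.card = 0} where
  toFun _ := ⟨∅, rfl⟩
  invFun _ := ⟨∅, rfl⟩
  left_inv J := Subtype.ext (card_eq_zero.mp J.2).symm
  right_inv J := Subtype.ext (card_eq_zero.mp J.2).symm

theorem map_preimage_castSuccEmb {S : Finset (Fin (n + 1))} (hS : Fin.last n ∉ S) :
    (S.preimage Fin.castSuccEmb Fin.castSuccEmb.injective.injOn).map Fin.castSuccEmb = S := by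
  ext x
  induction x using Fin.lastCases with
  | last => simpa using hS
  | cast i => simp

noncomputable def castSuccSumEquiv (s : ℕ) :
    {K : Finset (Fin n) // K.card = s + 1} ⊕ {K : Finset (Fin n) // K.card = s} ≃
      {S : Finset (Fin (n + 1)) // S.card = s + 1} where
  toFun := Sum.elim (fun K => ⟨K.1.map Fin.castSuccEmb, by rw [card_map, K.2]⟩)
    (fun K => ⟨insert (Fin.last n) (K.1.map Fin.castSuccEmb), by
      rw [card_insert_of_notMem (last_notMem_map_castSuccEmb _), card_map, K.2]⟩)
  invFun S :=
    if h : Fin.last n ∈ S.1 then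
      Sum.inr ⟨(S.1.erase (Fin.last n)).preimage Fin.castSuccEmb
        Fin.castSuccEmb.injective.injOn, by
        rw [← card_map, map_preimage_castSuccEmb (notMem_erase _ _), card_erase_of_mem h, S.2,
          add_tsub_cancel_right]⟩
    else
      Sum.inl ⟨S.1.preimage Fin.castSuccEmb Fin.castSuccEmb.injective.injOn, by
        rw [← card_map, map_preimage_castSuccEmb h, S.2]⟩
  left_inv := by
    rintro (K | K)
    · simp only [Sum.elim_inl, dif_neg (last_notMem_map_castSuccEmb _), preimage_map]
    · simp only [Sum.elim_inr, dif_pos (mem_insert_self _ _),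
        erase_insert (last_notMem_map_castSuccEmb _), preimage_map]
  right_inv S := by
    by_cases h : Fin.last n ∈ S.1
    · simp only [dif_pos h, Sum.elim_inr, map_preimage_castSuccEmb (notMem_erase _ _),
        insert_erase h]
    · simp only [dif_neg h, Sum.elim_inl, map_preimage_castSuccEmb h]

end Reindexing

section Bijective

variable {k : Type*} [CommRing k] {m n : ℕ}

theorem bijective_dualIota_zero {ε : Finset (Fin n) → ℤ} (hε : ∀ J, ε J = 1 ∨ ε J = -1) :
    Function.Bijective (dualIota (k := k) (m := m) ε 0) := by
  refine Module.Basis.bijective_of_apply_eq_zsmul Finsupp.basisSingleOne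
    Finsupp.basisSingleOne (Equiv.prodCongr (Equiv.refl _) (cardZeroEquiv _ _))
    (fun p => ε p.2.1) (fun p => hε _) fun ⟨β, J, hJ⟩ => ?_
  obtain rfl : J = ∅ := card_eq_zero.mp hJ
  change dualIota ε 0 (Finsupp.single (β, ⟨∅, hJ⟩) (1 : k)) =
    ε ∅ • (Finsupp.single (β, ⟨∅, card_empty⟩) 1 : DualX k m (n + 1) 0)
  rw [single_eq_taylorMonomial, single_eq_taylorMonomial, dualIota_taylorMonomial, map_empty]

theorem bijective_dualIota_coprod_dualSigma {ε₁ ε₂ : Finset (Fin n) → ℤ}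
    (hε₁ : ∀ J, ε₁ J = 1 ∨ ε₁ J = -1) (hε₂ : ∀ J, ε₂ J = 1 ∨ ε₂ J = -1) (s : ℕ) :
    Function.Bijective ((dualIota (k := k) (m := m) ε₁ (s + 1)).coprod (dualSigma ε₂ s)) := by
  refine Module.Basis.bijective_of_apply_eq_zsmul
    (Finsupp.basisSingleOne.prod Finsupp.basisSingleOne) Finsupp.basisSingleOne
    ((Equiv.prodSumDistrib _ _ _).symm.trans
      (Equiv.prodCongr (Equiv.refl _) (castSuccSumEquiv s)))
    (Sum.elim (fun p => ε₁ p.2.1) (fun p => ε₂ p.2.1)) (by rintro (p | p) <;> simp [hε₁, hε₂]) ?_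
  rintro (⟨β, J, hJ⟩ | ⟨β, J, hJ⟩)
  · simp [single_eq_taylorMonomial, dualIota_taylorMonomial, castSuccSumEquiv]
  · simp [single_eq_taylorMonomial, dualSigma_taylorMonomial, castSuccSumEquiv]

end Bijective

/-- T′(𝔪_1,…,𝔪_t) is isomorphic, as a cochain complex of
k-modules, to the cocone of φ̃′ : T′(𝔪_1,…,𝔪_{t−1}) → T′(n_1,…,n_{t−1}), via a
degreewise isomorphism sending x^α ẽ^J to ±x^α ē^{J∖{t}} when t ∈ J and to
±x^α e^J when t ∉ J, for suitable signs. -/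
theorem dual_taylor_iso_cocone {k : Type*} [CommRing k] {m n : ℕ}
    (a : Fin n → (Fin m →₀ ℕ)) (b : Fin m →₀ ℕ) :
    ∃ ε₁ ε₂ : Finset (Fin n) → ℤ,
      (∀ J, ε₁ J = 1 ∨ ε₁ J = -1) ∧ (∀ J, ε₂ J = 1 ∨ ε₂ J = -1) ∧
      -- the maps are bijective in every degree
      Function.Bijective (dualIota (k := k) (m := m) (n := n) ε₁ 0) ∧
      (∀ s : ℕ,
        Function.Bijective ((dualIota (k := k) (m := m) ε₁ (s + 1)).coprod (dualSigma ε₂ s))) ∧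
      -- they commute with the differentials: in degree 0 the cocone
      -- differential is b ↦ (−∂b, φ̃′b),
      (∀ x : DualX k m n 0,
        ((dualIota (k := k) ε₁ 1).coprod (dualSigma ε₂ 0))
            (-(dualD (k := k) a 0 x), dualPhi (k := k) a b 0 x) =
          dualD (k := k) (Fin.snoc a b) 0 (dualIota (k := k) ε₁ 0 x)) ∧
      -- and in degree s+1 it is (b, b̄) ↦ (−∂b, φ̃′b + ∂̄b̄)
      (∀ (s : ℕ) (x : DualX k m n (s + 1)) (xb : DualX k m n s),
        ((dualIota (k := k) ε₁ (s + 2)).coprod (dualSigma ε₂ (s + 1)))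
            (-(dualD (k := k) a (s + 1) x),
              dualPhi (k := k) a b (s + 1) x +
                dualD (k := k) (fun i => a i - a i ⊓ b) s xb) =
          dualD (k := k) (Fin.snoc a b) (s + 1)
            (((dualIota (k := k) ε₁ (s + 1)).coprod (dualSigma ε₂ s)) (x, xb))) := by
  refine ⟨altSign, fun _ => 1, altSign_eq_one_or_neg_one, fun _ => Or.inl rfl,
    bijective_dualIota_zero altSign_eq_one_or_neg_one,
    bijective_dualIota_coprod_dualSigma altSign_eq_one_or_neg_one (fun _ => Or.inl rfl),
    fun x => dualIota_neg_dualD_add_dualSigma_dualPhi a b 0 x, fun s x xb => ?_⟩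
  simp only [LinearMap.coprod_apply, map_add]
  rw [← dualIota_neg_dualD_add_dualSigma_dualPhi a b (s + 1) x,
    ← dualSigma_dualD_eq_dualD_dualSigma a b s xb]
  exact (add_assoc _ _ _).symm
end

section
/- Let 𝔪_1,…,𝔪_t be monomials in the variables x_1,…,x_m and n_i = 𝔪_i/gcd(𝔪_i,𝔪_t) for i = 1,…,t−1. The sequence of k-modules 0 → C(𝔪_1,…,𝔪_t) → C(𝔪_1,…,𝔪_{t−1}) → C(n_1,…,n_{t−1}) → 0 is exact, where the first map is the inclusion of basis monomials and the second map sends a basis monomial x^α to x^α/𝔪_t if 𝔪_t divides x^α and to 0 otherwise. In particular, this second map is well defined (its nonzero values lie in C(n_1,…,n_{t−1})), it is surjective, and its kernel is spanned by the monomials divisible by none of 𝔪_1,…,𝔪_t. -/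
/-!
STATEMENT 13: the sequence of k-modules
0 → C(𝔪_1,…,𝔪_t) → C(𝔪_1,…,𝔪_{t−1}) → C(n_1,…,n_{t−1}) → 0
is exact, where the first map is the inclusion of basis monomials and the
second sends a basis monomial x^α to x^α/𝔪_t if 𝔪_t | x^α and to 0 otherwise.

Monomials x^α are given by exponent vectors α ∈ `Fin m →₀ ℕ`; divisibility is
the pointwise order ≤ and division is truncated subtraction.  All the modules
C(𝔤_1,…,𝔤_s) are realised as submodules `cSubmodule` of the free k-module
`(Fin m →₀ ℕ) →₀ k` on all monomials: `cSubmodule k g` is spanned by the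
monomials divisible by none of the 𝔤_i, i.e. it consists of those elements
whose support contains only such monomials.  𝔪_1,…,𝔪_{t−1} have exponent
vectors `a i` (indexed by `i : Fin n`, n = t−1), 𝔪_t has exponent vector `b`,
and n_i = 𝔪_i/gcd(𝔪_i,𝔪_t) has exponent vector `a i - a i ⊓ b`.  The division
map x^α ↦ x^α/𝔪_t (or 0) is `divMap k b`.  The theorem asserts:
* C(𝔪_1,…,𝔪_t) ⊆ C(𝔪_1,…,𝔪_{t−1})  (the inclusion is well defined; it is
  injective as an actual inclusion of submodules);
* the division map sends C(𝔪_1,…,𝔪_{t−1}) into C(n_1,…,n_{t−1})  (the second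
  map is well defined);
* it maps C(𝔪_1,…,𝔪_{t−1}) onto C(n_1,…,n_{t−1})  (surjectivity);
* its kernel within C(𝔪_1,…,𝔪_{t−1}) is exactly C(𝔪_1,…,𝔪_t), the span of the
  monomials divisible by none of 𝔪_1,…,𝔪_t  (exactness in the middle).
-/

open Finset

/-- The submodule C(𝔤₁,…,𝔤_s) of the free k-module on all monomials, spanned
by the monomials divisible by none of the monomials 𝔤_i (given by their
exponent vectors `g i`). -/
def cSubmodule (k : Type*) [CommRing k] {m : ℕ} {ι : Type*} (g : ι → (Fin m →₀ ℕ)) :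
    Submodule k ((Fin m →₀ ℕ) →₀ k) where
  carrier := {f | ∀ α ∈ f.support, ∀ i, ¬ g i ≤ α}
  add_mem' := by
    intro f₁ f₂ h₁ h₂ α hα i
    rcases Finset.mem_union.mp (Finsupp.support_add hα) with h | h
    · exact h₁ α h i
    · exact h₂ α h i
  zero_mem' := by simp
  smul_mem' := by
    intro c f hf α hα
    exact hf α (Finsupp.support_smul hα)

open scoped Classical in
/-- The division map x^α ↦ x^α/𝔪_t if 𝔪_t | x^α, and x^α ↦ 0 otherwise,
where 𝔪_t is the monomial with exponent vector b. -/
noncomputable def divMap (k : Type*) [CommRing k] {m : ℕ} (b : Fin m →₀ ℕ) :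
    ((Fin m →₀ ℕ) →₀ k) →ₗ[k] ((Fin m →₀ ℕ) →₀ k) :=
  Finsupp.lsum ℕ fun α =>
    LinearMap.toSpanSingleton k ((Fin m →₀ ℕ) →₀ k)
      (if b ≤ α then Finsupp.single (α - b) (1 : k) else 0)

/-!
In the monomial basis, dividing by 𝔪_t = x^b is the shift of coefficients
`(divMap k b f) β = f (β + b)`, whose one-sided inverse is the push-forward along `β ↦ β + b`.  Everything then reduces to one fact about exponent vectors:
n_i = x^(a_i - a_i ⊓ b) divides x^β iff 𝔪_i divides x^(β + b).  Hence the shift carries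
C(𝔪_1,…,𝔪_{t−1}) into C(n_1,…,n_{t−1}) and the push-forward carries it back, while an element
of C(𝔪_1,…,𝔪_{t−1}) is killed exactly when no monomial of its support is divisible by 𝔪_t.
-/

open Finsupp

theorem Finsupp.tsub_inf_self_right {σ : Type*} (a b : σ →₀ ℕ) : a - a ⊓ b = a - b := by
  ext x
  simp only [tsub_apply, inf_apply]
  omega

theorem Finsupp.tsub_inf_le_iff {σ : Type*} (a b c : σ →₀ ℕ) : a - a ⊓ b ≤ c ↔ a ≤ c + b := by
  rw [tsub_inf_self_right, tsub_le_iff_right]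

section

variable {k : Type*} [CommRing k] {m : ℕ}

theorem mem_cSubmodule_iff {ι : Type*} {g : ι → (Fin m →₀ ℕ)} {f : (Fin m →₀ ℕ) →₀ k} :
    f ∈ cSubmodule k g ↔ ∀ α ∈ f.support, ∀ i, ¬ g i ≤ α :=
  Iff.rfl

theorem mem_cSubmodule_snoc_iff {n : ℕ} {a : Fin n → (Fin m →₀ ℕ)} {b : Fin m →₀ ℕ}
    {f : (Fin m →₀ ℕ) →₀ k} :
    f ∈ cSubmodule k (Fin.snoc a b) ↔ f ∈ cSubmodule k a ∧ ∀ α ∈ f.support, ¬ b ≤ α := by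
  simp only [mem_cSubmodule_iff, Fin.forall_fin_succ', Fin.snoc_castSucc, Fin.snoc_last,
    imp_and, forall_and]

theorem divMap_apply (b : Fin m →₀ ℕ) (f : (Fin m →₀ ℕ) →₀ k) (β : Fin m →₀ ℕ) :
    divMap k b f β = f (β + b) := by
  induction f using Finsupp.induction_linear with
  | zero => simp
  | add f g hf hg => rw [map_add, Finsupp.add_apply, hf, hg, Finsupp.add_apply]
  | single α c =>
    rw [divMap, lsum_single, LinearMap.toSpanSingleton_apply]
    by_cases h : b ≤ α
    · have hiff : α - b = β ↔ α = β + b :=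
        ⟨fun hβ => hβ ▸ (tsub_add_cancel_of_le h).symm, fun hα => hα ▸ add_tsub_cancel_right β b⟩
      simp only [if_pos h, smul_single, smul_eq_mul, mul_one, single_apply, hiff]
    · rw [if_neg h, smul_zero, Finsupp.zero_apply, single_apply, if_neg]
      rintro rfl
      exact h le_add_self

theorem mem_support_divMap_iff {b β : Fin m →₀ ℕ} {f : (Fin m →₀ ℕ) →₀ k} :
    β ∈ (divMap k b f).support ↔ β + b ∈ f.support := by
  simp only [mem_support_iff, divMap_apply]

theorem divMap_eq_zero_iff {b : Fin m →₀ ℕ} {f : (Fin m →₀ ℕ) →₀ k} :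
    divMap k b f = 0 ↔ ∀ α ∈ f.support, ¬ b ≤ α := by
  refine ⟨fun h α hα hb => ?_, fun h => ?_⟩
  · rw [← tsub_add_cancel_of_le hb, ← mem_support_divMap_iff, h] at hα
    simp at hα
  · ext β
    by_contra hβ
    exact h _ (mem_support_divMap_iff.mp (mem_support_iff.mpr hβ)) le_add_self

theorem divMap_mapDomain_add_right (b : Fin m →₀ ℕ) (g : (Fin m →₀ ℕ) →₀ k) :
    divMap k b (mapDomain (· + b) g) = g := by
  ext β
  rw [divMap_apply, mapDomain_apply (add_left_injective b)]

variable {ι : Type*} {a : ι → (Fin m →₀ ℕ)} {b : Fin m →₀ ℕ}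

theorem divMap_mem_cSubmodule {f : (Fin m →₀ ℕ) →₀ k} (hf : f ∈ cSubmodule k a) :
    divMap k b f ∈ cSubmodule k (fun i => a i - a i ⊓ b) := by
  intro β hβ i hle
  exact hf _ (mem_support_divMap_iff.mp hβ) i ((tsub_inf_le_iff _ _ _).mp hle)

theorem mapDomain_add_right_mem_cSubmodule {g : (Fin m →₀ ℕ) →₀ k}
    (hg : g ∈ cSubmodule k (fun i => a i - a i ⊓ b)) :
    mapDomain (· + b) g ∈ cSubmodule k a := by
  intro α hα i hle
  obtain ⟨β, hβ, rfl⟩ := Finset.mem_image.mp (mapDomain_support hα)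
  exact hg β hβ i ((tsub_inf_le_iff _ _ _).mpr hle)

end

/-- exactness of
0 → C(𝔪_1,…,𝔪_t) → C(𝔪_1,…,𝔪_{t−1}) → C(n_1,…,n_{t−1}) → 0. -/
theorem cmod_ses {k : Type*} [CommRing k] {m n : ℕ}
    (a : Fin n → (Fin m →₀ ℕ)) (b : Fin m →₀ ℕ) :
    -- the inclusion C(𝔪_1,…,𝔪_t) ⊆ C(𝔪_1,…,𝔪_{t−1})
    cSubmodule k (Fin.snoc a b) ≤ cSubmodule k a ∧
    -- the division map is well defined: it sends C(𝔪_1,…,𝔪_{t−1}) into C(n)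
    (∀ f ∈ cSubmodule k a, divMap k b f ∈ cSubmodule k (fun i => a i - a i ⊓ b)) ∧
    -- surjectivity onto C(n)
    (∀ g ∈ cSubmodule k (fun i => a i - a i ⊓ b),
      ∃ f ∈ cSubmodule k a, divMap k b f = g) ∧
    -- the kernel of the division map on C(𝔪_1,…,𝔪_{t−1}) is exactly
    -- C(𝔪_1,…,𝔪_t), spanned by the monomials divisible by none of 𝔪_1,…,𝔪_t
    (∀ f ∈ cSubmodule k a, (divMap k b f = 0 ↔ f ∈ cSubmodule k (Fin.snoc a b))) :=
  ⟨fun _ hf => (mem_cSubmodule_snoc_iff.mp hf).1,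
    fun _ hf => divMap_mem_cSubmodule hf,
    fun g hg => ⟨_, mapDomain_add_right_mem_cSubmodule hg, divMap_mapDomain_add_right b g⟩,
    fun _ hf => by rw [divMap_eq_zero_iff, mem_cSubmodule_snoc_iff, and_iff_right hf]⟩
end
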